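/- arXiv:1712.10079 — 4 statements merged into one kernel-verified Lean document; each statement's English description precedes it below -/
import Mathlib

section
/- Let 0<β<1, ℏ>0, E∈ℝ, f₀∈ℂ, and set ρ = ℏ^{−β} e^{−iβπ/2} E. Then the function f(t) = f₀ E_β(ρ t^β) satisfies f(0) = f₀, is differentiable on (0,∞), and solves the time fractional Schrödinger equation: for all t>0, ℏ^β e^{iβπ/2} · (1/Γ(1−β)) ∫_0^t f′(τ) (t−τ)^{−β} dτ = E f(t). -/
open MeasureTheory

/-- The Mittag-Leffler function `E_β(z) = ∑ zⁿ/Γ(βn+1)`. -/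
noncomputable def mittagLeffler (β : ℝ) (z : ℂ) : ℂ :=
  ∑' n : ℕ, z ^ n / (Real.Gamma (β * n + 1) : ℂ)

/-- The Caputo fractional derivative of order `β`, `0 < β < 1`. -/
noncomputable def caputoDeriv (β : ℝ) (f : ℝ → ℂ) (t : ℝ) : ℂ :=
  ((1 / Real.Gamma (1 - β) : ℝ) : ℂ) *
    ∫ τ in (0 : ℝ)..t, deriv f τ * (((t - τ) ^ (-β) : ℝ) : ℂ)

/-!
Writing `E_β(ρ t^β) = ∑ cₙ t^{βn}` with `cₙ = ρⁿ / Γ(βn + 1)`, the Caputo derivative can be taken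
term by term. The Beta integral gives `D^β t^{βn} = Γ(βn + 1) / Γ(β(n - 1) + 1) · t^{β(n - 1)}` for
`n ≥ 1`, while the constant term is annihilated, so `D^β E_β(ρ t^β) = ρ E_β(ρ t^β)`, and
`(iℏ)^β ρ = E`. Termwise differentiation and integration are justified by the superexponential
growth of `Γ(βn + 1)`, which follows from the Gautschi-type bound
`Γ(x + 1) ≤ Γ(x + β) (x + β)^(1 - β)`, a consequence of the log-convexity of `Γ`.
-/

open Real Filter Topology Set

namespace Real

theorem Gamma_add_one_le_Gamma_add_mul_rpow {β x : ℝ} (hβ0 : 0 < β) (hβ1 : β < 1) (hx : 0 < x) :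
    Gamma (x + 1) ≤ Gamma (x + β) * (x + β) ^ (1 - β) := by
  have hxβ : 0 < x + β := by linarith
  have hconv := Gamma_mul_add_mul_le_rpow_Gamma_mul_rpow_Gamma hxβ (by linarith : 0 < x + β + 1)
    hβ0 (sub_pos.2 hβ1) (by ring)
  rw [Gamma_add_one hxβ.ne', mul_rpow hxβ.le (Gamma_pos_of_pos hxβ).le] at hconv
  calc Gamma (x + 1) = Gamma (β * (x + β) + (1 - β) * (x + β + 1)) := by ring_nf
    _ ≤ _ := hconv
    _ = Gamma (x + β) ^ (β + (1 - β)) * (x + β) ^ (1 - β) := by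
      rw [rpow_add (Gamma_pos_of_pos hxβ)]; ring
    _ = _ := by rw [add_sub_cancel, rpow_one]

theorem tendsto_Gamma_div_Gamma_add_atTop {β : ℝ} (hβ0 : 0 < β) (hβ1 : β < 1) :
    Tendsto (fun x => Gamma x / Gamma (x + β)) atTop (𝓝 0) := by
  have hshift : Tendsto (fun x : ℝ => x + β) atTop atTop :=
    tendsto_atTop_add_const_right _ β tendsto_id
  have hquot : Tendsto (fun x : ℝ => (x + β) / x) atTop (𝓝 1) := by
    have := (tendsto_const_nhds (x := (1 : ℝ))).add
      ((tendsto_const_nhds (x := β)).div_atTop tendsto_id)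
    rw [add_zero] at this
    refine this.congr' ?_
    filter_upwards [eventually_gt_atTop 0] with x hx
    rw [add_div, div_self hx.ne', id]
  have hbound : Tendsto (fun x => (x + β) ^ (-β) * ((x + β) / x)) atTop (𝓝 0) := by
    simpa using ((tendsto_rpow_neg_atTop hβ0).comp hshift).mul hquot
  refine tendsto_of_tendsto_of_tendsto_of_le_of_le' tendsto_const_nhds hbound ?_ ?_
  · filter_upwards [eventually_gt_atTop 0] with x hx
    exact div_nonneg (Gamma_pos_of_pos hx).le (Gamma_pos_of_pos (by linarith)).le
  · filter_upwards [eventually_gt_atTop 0] with x hx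
    have hxβ : 0 < x + β := by linarith
    have hgautschi := Gamma_add_one_le_Gamma_add_mul_rpow hβ0 hβ1 hx
    rw [Gamma_add_one hx.ne'] at hgautschi
    rw [div_le_iff₀ (Gamma_pos_of_pos hxβ), rpow_neg hxβ.le]
    calc Gamma x = x * Gamma x / x := by field_simp
      _ ≤ Gamma (x + β) * (x + β) ^ (1 - β) / x := by gcongr
      _ = ((x + β) ^ β)⁻¹ * ((x + β) / x) * Gamma (x + β) := by
        rw [rpow_sub hxβ, rpow_one]; field_simp

end Real

theorem summable_pow_div_Gamma_mul_add_one {β : ℝ} (hβ0 : 0 < β) (hβ1 : β < 1) (r : ℝ) :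
    Summable fun n : ℕ => r ^ n / Gamma (β * n + 1) := by
  have hx : Tendsto (fun n : ℕ => β * n + 1) atTop atTop :=
    tendsto_atTop_add_const_right _ 1 (tendsto_natCast_atTop_atTop.const_mul_atTop hβ0)
  have hratio : Tendsto (fun n : ℕ => |r| * (Gamma (β * n + 1) / Gamma (β * n + 1 + β)))
      atTop (𝓝 0) := by
    simpa using ((Real.tendsto_Gamma_div_Gamma_add_atTop hβ0 hβ1).comp hx).const_mul |r|
  refine summable_of_ratio_norm_eventually_le (by norm_num : (1 / 2 : ℝ) < 1) ?_
  filter_upwards [hratio.eventually (ge_mem_nhds (by norm_num : (0 : ℝ) < 1 / 2))] with n hn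
  have hG := Gamma_pos_of_pos (by positivity : 0 < β * n + 1)
  have hG' := Gamma_pos_of_pos (by positivity : 0 < β * n + 1 + β)
  rw [Nat.cast_succ, show β * (n + 1) + 1 = β * n + 1 + β by ring, norm_div, norm_div, norm_pow,
    norm_pow, Real.norm_of_nonneg hG.le, Real.norm_of_nonneg hG'.le, Real.norm_eq_abs]
  calc |r| ^ (n + 1) / Gamma (β * n + 1 + β)
      = |r| ^ n / Gamma (β * n + 1) * (|r| * (Gamma (β * n + 1) / Gamma (β * n + 1 + β))) := by
        field_simp; ring
    _ ≤ |r| ^ n / Gamma (β * n + 1) * (1 / 2) := by gcongr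
    _ = _ := by ring

theorem summable_nat_mul_pow_div_Gamma_mul_add_one {β : ℝ} (hβ0 : 0 < β) (hβ1 : β < 1) (r : ℝ) :
    Summable fun n : ℕ => n * r ^ n / Gamma (β * n + 1) := by
  refine .of_norm_bounded (summable_pow_div_Gamma_mul_add_one hβ0 hβ1 (2 * |r|)) fun n => ?_
  have hG := Gamma_pos_of_pos (by positivity : 0 < β * n + 1)
  rw [norm_div, norm_mul, norm_pow, Real.norm_of_nonneg hG.le, Real.norm_natCast,
    Real.norm_eq_abs, mul_pow]
  gcongr
  exact_mod_cast n.lt_two_pow_self.le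

theorem intervalIntegrable_rpow_sub_one_mul_sub_rpow_sub_one {a b t : ℝ} (ha : 0 < a)
    (hb : 0 < b) (ht : 0 < t) :
    IntervalIntegrable (fun τ => τ ^ (a - 1) * (t - τ) ^ (b - 1)) volume 0 t := by
  have hleft : ∀ {a b : ℝ}, 0 < a →
      IntervalIntegrable (fun τ => τ ^ (a - 1) * (t - τ) ^ (b - 1)) volume 0 (t / 2) := by
    intro a b ha
    refine (intervalIntegral.intervalIntegrable_rpow' (by linarith)).mul_continuousOn
      ((continuousOn_const.sub continuousOn_id).rpow_const fun τ hτ => Or.inl ?_)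
    rw [uIcc_of_le (by linarith)] at hτ
    show t - τ ≠ 0
    linarith [hτ.2]
  refine (hleft ha).trans ?_
  have hright := (hleft (b := a) hb).comp_sub_left t
  simp only [sub_sub_cancel, sub_zero, show t - t / 2 = t / 2 by ring] at hright
  simpa only [mul_comm] using hright.symm

theorem integral_rpow_sub_one_mul_sub_rpow_sub_one {a b t : ℝ} (ha : 0 < a) (hb : 0 < b)
    (ht : 0 < t) :
    ∫ τ in (0 : ℝ)..t, τ ^ (a - 1) * (t - τ) ^ (b - 1) =
      t ^ (a + b - 1) * (Gamma a * Gamma b / Gamma (a + b)) := by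
  apply Complex.ofReal_injective
  have hbeta := Complex.betaIntegral_scaled a b ht
  rw [Complex.betaIntegral_eq_Gamma_mul_div _ _ (by simpa using ha) (by simpa using hb)] at hbeta
  rw [← intervalIntegral.integral_ofReal, Complex.ofReal_mul, Complex.ofReal_cpow ht.le,
    Complex.ofReal_div, Complex.ofReal_mul, ← Complex.Gamma_ofReal, ← Complex.Gamma_ofReal,
    ← Complex.Gamma_ofReal]
  push_cast
  rw [← hbeta]
  refine intervalIntegral.integral_congr fun τ hτ => ?_
  rw [uIcc_of_le ht.le] at hτ
  rw [Complex.ofReal_cpow hτ.1, Complex.ofReal_cpow (sub_nonneg.2 hτ.2)]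
  push_cast
  rfl

theorem intervalIntegrable_mul_rpow_sub_one_mul_sub_rpow_neg {β γ t : ℝ} (hβ : β < 1)
    (hγ : 0 ≤ γ) (ht : 0 < t) :
    IntervalIntegrable (fun τ => γ * τ ^ (γ - 1) * (t - τ) ^ (-β)) volume 0 t := by
  rcases hγ.eq_or_lt with rfl | hγ
  · simp
  simpa only [mul_assoc, show 1 - β - 1 = -β by ring] using
    (intervalIntegrable_rpow_sub_one_mul_sub_rpow_sub_one hγ (sub_pos.2 hβ) ht).const_mul γ

theorem integral_mul_rpow_sub_one_mul_sub_rpow_neg {β γ t : ℝ} (hβ : β < 1) (hγ : 0 < γ)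
    (ht : 0 < t) :
    ∫ τ in (0 : ℝ)..t, γ * τ ^ (γ - 1) * (t - τ) ^ (-β) =
      Gamma (γ + 1) * Gamma (1 - β) / Gamma (γ + 1 - β) * t ^ (γ - β) := by
  have hbeta := integral_rpow_sub_one_mul_sub_rpow_sub_one hγ (sub_pos.2 hβ) ht
  rw [show 1 - β - 1 = -β by ring, show γ + (1 - β) - 1 = γ - β by ring,
    show γ + (1 - β) = γ + 1 - β by ring] at hbeta
  simp only [mul_assoc, intervalIntegral.integral_const_mul, hbeta, Gamma_add_one hγ.ne']
  ring

theorem integral_norm_mul_ofReal {α : Type*} [MeasurableSpace α] {μ : Measure α} (c : ℂ)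
    {g : α → ℝ} (hg : 0 ≤ᵐ[μ] g) :
    ∫ x, ‖c * g x‖ ∂μ = ‖∫ x, c * g x ∂μ‖ := by
  calc ∫ x, ‖c * g x‖ ∂μ = ∫ x, ‖c‖ * g x ∂μ := by
        refine integral_congr_ae (hg.mono fun x hx => ?_)
        simp only [norm_mul, Complex.norm_real, Real.norm_of_nonneg hx]
    _ = ‖∫ x, c * g x ∂μ‖ := by
        rw [integral_const_mul, integral_const_mul, integral_complex_ofReal, norm_mul,
          Complex.norm_real, Real.norm_of_nonneg (integral_nonneg_of_ae hg)]

theorem caputoDeriv_const_mul (β : ℝ) (c : ℂ) (f : ℝ → ℂ) (t : ℝ) :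
    caputoDeriv β (fun s => c * f s) t = c * caputoDeriv β f t := by
  simp only [caputoDeriv, deriv_const_mul_field', mul_assoc, intervalIntegral.integral_const_mul]
  ring

noncomputable def mittagLefflerCoeff (β : ℝ) (ρ : ℂ) (n : ℕ) : ℂ :=
  ρ ^ n / (Gamma (β * n + 1) : ℂ)

theorem mittagLeffler_zero (β : ℝ) : mittagLeffler β 0 = 1 := by
  rw [mittagLeffler, tsum_eq_single 0 fun n hn => by simp [zero_pow hn]]
  simp

theorem mittagLeffler_mul_rpow (β : ℝ) (ρ : ℂ) {s : ℝ} (hs : 0 ≤ s) :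
    mittagLeffler β (ρ * ((s ^ β : ℝ) : ℂ)) =
      ∑' n : ℕ, mittagLefflerCoeff β ρ n * ((s ^ (β * n) : ℝ) : ℂ) := by
  refine tsum_congr fun n => ?_
  rw [mittagLefflerCoeff, mul_pow, rpow_mul hs, rpow_natCast, Complex.ofReal_pow]
  ring

section

variable {β : ℝ} (ρ : ℂ)

theorem norm_mittagLefflerCoeff_mul_rpow (hβ : 0 ≤ β) (n : ℕ) {s : ℝ} (hs : 0 ≤ s) :
    ‖mittagLefflerCoeff β ρ n‖ * s ^ (β * n) = (‖ρ‖ * s ^ β) ^ n / Gamma (β * n + 1) := by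
  have hG := Gamma_pos_of_pos (by positivity : 0 < β * n + 1)
  rw [mittagLefflerCoeff, norm_div, norm_pow, Complex.norm_real, Real.norm_of_nonneg hG.le,
    mul_pow, rpow_mul hs, rpow_natCast]
  ring

theorem summable_mittagLefflerCoeff_mul_rpow (hβ0 : 0 < β) (hβ1 : β < 1) {s : ℝ} (hs : 0 ≤ s) :
    Summable fun n : ℕ => mittagLefflerCoeff β ρ n * ((s ^ (β * n) : ℝ) : ℂ) := by
  refine .of_norm_bounded (summable_pow_div_Gamma_mul_add_one hβ0 hβ1 (‖ρ‖ * s ^ β)) fun n => ?_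
  rw [norm_mul, Complex.norm_real, Real.norm_of_nonneg (rpow_nonneg hs _),
    norm_mittagLefflerCoeff_mul_rpow ρ hβ0.le n hs]

theorem hasDerivAt_mittagLeffler_mul_rpow (hβ0 : 0 < β) (hβ1 : β < 1) {t : ℝ} (ht : 0 < t) :
    HasDerivAt (fun s => mittagLeffler β (ρ * ((s ^ β : ℝ) : ℂ)))
      (∑' n : ℕ, mittagLefflerCoeff β ρ n * ((β * n * t ^ (β * n - 1) : ℝ) : ℂ)) t := by
  have hmem : t ∈ Ioo (t / 2) (t + 1) := ⟨by linarith, by linarith⟩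
  have hbound : Summable fun n : ℕ =>
      β * (t / 2)⁻¹ * (n * ((‖ρ‖ * (t + 1) ^ β) ^ n / Gamma (β * n + 1))) :=
    ((summable_nat_mul_pow_div_Gamma_mul_add_one hβ0 hβ1 (‖ρ‖ * (t + 1) ^ β)).congr fun n =>
      mul_div_assoc _ _ _).mul_left _
  refine (hasDerivAt_tsum_of_isPreconnected hbound isOpen_Ioo (convex_Ioo _ _).isPreconnected
    (g := fun n s => mittagLefflerCoeff β ρ n * ((s ^ (β * n) : ℝ) : ℂ))
    (g' := fun n s => mittagLefflerCoeff β ρ n * ((β * n * s ^ (β * n - 1) : ℝ) : ℂ)) ?_ ?_ hmem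
    (summable_mittagLefflerCoeff_mul_rpow ρ hβ0 hβ1 ht.le) hmem).congr_of_eventuallyEq ?_
  · intro n y hy
    exact ((hasDerivAt_rpow_const (Or.inl (by linarith [hy.1] : y ≠ 0))).ofReal_comp).const_mul _
  · intro n y hy
    have hy0 : 0 < y := by linarith [hy.1]
    rw [← norm_mittagLefflerCoeff_mul_rpow ρ hβ0.le n (by linarith), norm_mul, Complex.norm_real,
      Real.norm_of_nonneg (by positivity), rpow_sub_one hy0.ne']
    have hpow : y ^ (β * n) ≤ (t + 1) ^ (β * n) := rpow_le_rpow hy0.le hy.2.le (by positivity)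
    have hinv : y⁻¹ ≤ (t / 2)⁻¹ := inv_anti₀ (by positivity) hy.1.le
    calc ‖mittagLefflerCoeff β ρ n‖ * (β * n * (y ^ (β * n) / y))
        = β * n * ‖mittagLefflerCoeff β ρ n‖ * (y ^ (β * n) * y⁻¹) := by ring
      _ ≤ β * n * ‖mittagLefflerCoeff β ρ n‖ * ((t + 1) ^ (β * n) * (t / 2)⁻¹) := by gcongr
      _ = _ := by ring
  · filter_upwards [Ioi_mem_nhds ht] with s hs using mittagLeffler_mul_rpow β ρ hs.le

theorem integral_mittagLefflerCoeff_succ_mul_rpow_mul_sub_rpow_neg (hβ0 : 0 < β) (hβ1 : β < 1)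
    {t : ℝ} (ht : 0 < t) (m : ℕ) :
    ∫ τ in (0 : ℝ)..t, mittagLefflerCoeff β ρ (m + 1) *
        ((β * (m + 1 : ℕ) * τ ^ (β * (m + 1 : ℕ) - 1) * (t - τ) ^ (-β) : ℝ) : ℂ) =
      Gamma (1 - β) * ρ * (mittagLefflerCoeff β ρ m * ((t ^ (β * m) : ℝ) : ℂ)) := by
  have hG : (Gamma (β * (m + 1) + 1) : ℂ) ≠ 0 := by
    exact_mod_cast (Gamma_pos_of_pos (by positivity : 0 < β * (m + 1) + 1)).ne'
  rw [intervalIntegral.integral_const_mul, intervalIntegral.integral_ofReal,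
    integral_mul_rpow_sub_one_mul_sub_rpow_neg hβ1 (by positivity) ht, mittagLefflerCoeff,
    mittagLefflerCoeff]
  push_cast
  rw [show β * (m + 1) + 1 - β = β * m + 1 by ring, show β * (m + 1) - β = β * m by ring]
  field_simp
  ring

theorem integral_deriv_mittagLeffler_mul_rpow_mul_sub_rpow_neg (hβ0 : 0 < β) (hβ1 : β < 1)
    {t : ℝ} (ht : 0 < t) :
    ∫ τ in (0 : ℝ)..t, deriv (fun s => mittagLeffler β (ρ * ((s ^ β : ℝ) : ℂ))) τ *
        (((t - τ) ^ (-β) : ℝ) : ℂ) =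
      Gamma (1 - β) * ρ * mittagLeffler β (ρ * ((t ^ β : ℝ) : ℂ)) := by
  set F : ℕ → ℝ → ℂ := fun n τ =>
    mittagLefflerCoeff β ρ n * ((β * n * τ ^ (β * n - 1) * (t - τ) ^ (-β) : ℝ) : ℂ)
  have hint : ∀ n, Integrable (F n) (volume.restrict (Ioc 0 t)) := fun n =>
    (intervalIntegrable_mul_rpow_sub_one_mul_sub_rpow_neg hβ1 (by positivity) ht).1.ofReal
      |>.const_mul _
  have hterm (m : ℕ) : ∫ τ in Ioc 0 t, F (m + 1) τ =
      Gamma (1 - β) * ρ * (mittagLefflerCoeff β ρ m * ((t ^ (β * m) : ℝ) : ℂ)) := by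
    rw [← intervalIntegral.integral_of_le ht.le,
      integral_mittagLefflerCoeff_succ_mul_rpow_mul_sub_rpow_neg ρ hβ0 hβ1 ht]
  have hsum : Summable fun n => ∫ τ in Ioc 0 t, ‖F n τ‖ := by
    have hnorm : ∀ n, ∫ τ in Ioc 0 t, ‖F n τ‖ = ‖∫ τ in Ioc 0 t, F n τ‖ := fun n =>
      integral_norm_mul_ofReal _ <| (ae_restrict_iff' measurableSet_Ioc).2 <| .of_forall
        fun τ hτ => by have := sub_nonneg.2 hτ.2; have := hτ.1.le; positivity
    refine (summable_nat_add_iff 1).1 ?_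
    simp only [hnorm, hterm]
    exact ((summable_mittagLefflerCoeff_mul_rpow ρ hβ0 hβ1 ht.le).mul_left _).norm
  have hhasSum : HasSum (fun n => ∫ τ in Ioc 0 t, F n τ)
      (Gamma (1 - β) * ρ * mittagLeffler β (ρ * ((t ^ β : ℝ) : ℂ))) := by
    refine (hasSum_nat_add_iff' 1).1 ?_
    have hF0 : ∫ τ in Ioc 0 t, F 0 τ = 0 := by simp [F]
    simp only [hterm, mittagLeffler_mul_rpow β ρ ht.le, Finset.range_one, Finset.sum_singleton,
      hF0, sub_zero]
    exact (summable_mittagLefflerCoeff_mul_rpow ρ hβ0 hβ1 ht.le).hasSum.mul_left _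
  rw [intervalIntegral.integral_of_le ht.le,
    ← (hasSum_integral_of_summable_integral_norm hint hsum).unique hhasSum]
  refine setIntegral_congr_fun measurableSet_Ioc fun τ hτ => ?_
  rw [(hasDerivAt_mittagLeffler_mul_rpow ρ hβ0 hβ1 hτ.1).deriv, ← tsum_mul_right]
  refine tsum_congr fun n => ?_
  simp only [F]
  push_cast
  ring

theorem caputoDeriv_mittagLeffler_mul_rpow (hβ0 : 0 < β) (hβ1 : β < 1) {t : ℝ} (ht : 0 < t) :
    caputoDeriv β (fun s => mittagLeffler β (ρ * ((s ^ β : ℝ) : ℂ))) t =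
      ρ * mittagLeffler β (ρ * ((t ^ β : ℝ) : ℂ)) := by
  have hG : (Gamma (1 - β) : ℂ) ≠ 0 := by exact_mod_cast (Gamma_pos_of_pos (sub_pos.2 hβ1)).ne'
  rw [caputoDeriv, integral_deriv_mittagLeffler_mul_rpow_mul_sub_rpow_neg ρ hβ0 hβ1 ht]
  push_cast
  field_simp

end

theorem mittagLeffler_solves_time_fractional_schrodinger
    (β hbar E : ℝ) (f₀ : ℂ) (hβ0 : 0 < β) (hβ1 : β < 1) (hh : 0 < hbar) :
    let ρ : ℂ := ((hbar ^ (-β) : ℝ) : ℂ) *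
      Complex.exp (-(Complex.I * (β : ℂ) * (Real.pi : ℂ) / 2)) * (E : ℂ)
    let f : ℝ → ℂ := fun t => f₀ * mittagLeffler β (ρ * ((t ^ β : ℝ) : ℂ))
    f 0 = f₀ ∧
    (∀ t ∈ Set.Ioi (0 : ℝ), DifferentiableAt ℝ f t) ∧
    (∀ t ∈ Set.Ioi (0 : ℝ),
      ((hbar ^ β : ℝ) : ℂ) * Complex.exp (Complex.I * (β : ℂ) * (Real.pi : ℂ) / 2) *
        caputoDeriv β f t = (E : ℂ) * f t) := by
  intro ρ f
  refine ⟨?_, fun t ht => ?_, fun t ht => ?_⟩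
  · simp [f, zero_rpow hβ0.ne', mittagLeffler_zero]
  · exact ((hasDerivAt_mittagLeffler_mul_rpow ρ hβ0 hβ1 ht).const_mul f₀).differentiableAt
  · have hcancel : ((hbar ^ β : ℝ) : ℂ) *
        Complex.exp (Complex.I * (β : ℂ) * (Real.pi : ℂ) / 2) * ρ = E := by
      have : ((hbar ^ β : ℝ) : ℂ) ≠ 0 := by exact_mod_cast (rpow_pos_of_pos hh β).ne'
      simp only [ρ, rpow_neg hh.le, Complex.exp_neg, Complex.ofReal_inv]
      field_simp
    rw [caputoDeriv_const_mul, caputoDeriv_mittagLeffler_mul_rpow ρ hβ0 hβ1 ht, ← hcancel]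
    ring
end

section
/- Let 2/3<β<1, ℏ>0, E<0 (E real), t∈ℝ. Set ρ = ℏ^{−β} e^{−iβπ/2} E and s₀ = |E|^{1/β} ℏ^{−1} e^{i(π/β − π/2)}. Then π/β − π/2 ∈ (π/2, π) (so s₀ is in the principal branch domain), s₀^β = ρ (principal power), and lim_{s→s₀} (s − s₀) s^{β−1} e^{st}/(s^β − ρ) = (1/β) exp(−i t |E|^{1/β} e^{iπ/β}/ℏ), where the limit is over s∈ℂ∖{s₀} and s^β, s^{β−1} are principal powers. -/
/-!
Write `s₀ = r e^{iθ}` with `r = |E|^{1/β}/ℏ` and `θ = π/β - π/2`. For `2/3 < β < 1` the angle lies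
in `(π/2, π)`, inside the range of the principal argument, so `s₀^β = r^β e^{iβθ}`, and
`e^{iβθ} = e^{iπ} e^{-iβπ/2}` turns this into `ρ` because `E = -|E|`. Hence `s₀` is a zero of
`s ↦ s^β - ρ` with nonzero derivative `β s₀^{β-1}`, and the residue of `s^{β-1} e^{st}/(s^β - ρ)`
there is `s₀^{β-1} e^{s₀ t}/(β s₀^{β-1}) = e^{s₀ t}/β`.
-/

open Complex Filter Set Topology
open scoped Real

theorem tendsto_sub_mul_div_of_hasDerivAt {𝕜 : Type*} [NontriviallyNormedField 𝕜]
    {f g : 𝕜 → 𝕜} {z₀ g' : 𝕜} (hf : ContinuousAt f z₀) (hg : HasDerivAt g g' z₀)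
    (hgz₀ : g z₀ = 0) (hg' : g' ≠ 0) :
    Tendsto (fun z => (z - z₀) * f z / g z) (𝓝[≠] z₀) (𝓝 (f z₀ / g')) := by
  have hslope : Tendsto (fun z => g z / (z - z₀)) (𝓝[≠] z₀) (𝓝 g') := by
    refine (hasDerivAt_iff_tendsto_slope.mp hg).congr fun z => ?_
    rw [slope_def_field, hgz₀, sub_zero]
  refine ((hf.tendsto.mono_left nhdsWithin_le_nhds).div hslope hg').congr fun z => ?_
  rw [Pi.div_apply, div_div_eq_mul_div, mul_comm]

namespace Complex

theorem cpow_ofReal_mul_exp_mul_I {r θ : ℝ} (hr : 0 < r) (hθ : θ ∈ Ioc (-π) π)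
    (a : ℂ) : ((r : ℂ) * exp (θ * I)) ^ a = (r : ℂ) ^ a * exp (a * θ * I) := by
  have hlog : log (exp (θ * I)) = θ * I := by
    apply log_exp <;> simp [hθ.1, hθ.2]
  rw [cpow_def_of_ne_zero (mul_ne_zero (ofReal_ne_zero.mpr hr.ne') (exp_ne_zero _)),
    log_ofReal_mul hr (exp_ne_zero _), hlog, add_mul, exp_add,
    cpow_def_of_ne_zero (ofReal_ne_zero.mpr hr.ne'), ofReal_log hr.le]
  ring_nf

theorem ofReal_mul_exp_mul_I_mem_slitPlane {r θ : ℝ} (hr : 0 < r) (hθ : θ ∈ Ioo 0 π) :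
    (r : ℂ) * exp (θ * I) ∈ slitPlane := by
  refine mem_slitPlane_iff.mpr (Or.inr ?_)
  rw [im_ofReal_mul, exp_ofReal_mul_I_im]
  exact (mul_pos hr (Real.sin_pos_of_pos_of_lt_pi hθ.1 hθ.2)).ne'

theorem exp_I_mul_sub_pi_div_two (z : ℂ) : exp (I * (z - π / 2)) = -I * exp (I * z) := by
  rw [mul_sub, exp_sub, mul_comm I (π / 2 : ℂ), exp_pi_div_two_mul_I, div_eq_mul_inv, inv_I]
  ring

end Complex

theorem pi_div_sub_pi_div_two_mem_Ioo {β : ℝ} (hβ0 : 2 / 3 < β) (hβ1 : β < 1) :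
    π / β - π / 2 ∈ Ioo (π / 2) π := by
  have hβ : 0 < β := by linarith
  have hπ := Real.pi_pos
  constructor
  · have : π < π / β := by rw [lt_div_iff₀ hβ]; nlinarith
    linarith
  · have : π / β < 3 * π / 2 := by rw [div_lt_iff₀ hβ]; nlinarith
    linarith

theorem rpow_rpow_one_div_div {a h β : ℝ} (ha : 0 ≤ a) (hh : 0 ≤ h) (hβ : β ≠ 0) :
    (a ^ (1 / β) / h) ^ β = a * h ^ (-β) := by
  rw [Real.div_rpow (Real.rpow_nonneg ha _) hh, ← Real.rpow_mul ha, one_div_mul_cancel hβ,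
    Real.rpow_one, Real.rpow_neg hh, div_eq_mul_inv]

theorem pole_cpow_eq {β hbar E : ℝ} (hβ0 : 2 / 3 < β) (hβ1 : β < 1) (hh : 0 < hbar)
    (hE : E < 0) :
    ((((|E| ^ (1 / β) / hbar : ℝ) : ℂ) *
      exp ((π / β - π / 2 : ℝ) * I)) ^ (β : ℂ)) =
      ((hbar ^ (-β) : ℝ) : ℂ) * exp (-(I * (β : ℂ) * (π : ℂ) / 2)) * (E : ℂ) := by
  have hr : 0 < |E| ^ (1 / β) / hbar := div_pos (Real.rpow_pos_of_pos (abs_pos.mpr hE.ne) _) hh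
  have hθ := pi_div_sub_pi_div_two_mem_Ioo hβ0 hβ1
  have hβ : β ≠ 0 := by linarith
  have hβC : (β : ℂ) ≠ 0 := ofReal_ne_zero.mpr hβ
  rw [cpow_ofReal_mul_exp_mul_I hr ⟨by linarith [hθ.1, Real.pi_pos], hθ.2.le⟩,
    ← ofReal_cpow hr.le, rpow_rpow_one_div_div (abs_nonneg E) hh.le hβ,
    show (β : ℂ) * ((π / β - π / 2 : ℝ) : ℂ) * I
      = π * I + -(I * β * π / 2) by push_cast; field_simp; ring,
    exp_add, exp_pi_mul_I, abs_of_neg hE]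
  push_cast
  ring

theorem residue_at_pole_negative_energy_large_beta
    (β hbar E t : ℝ) (hβ0 : 2 / 3 < β) (hβ1 : β < 1) (hh : 0 < hbar) (hE : E < 0) :
    let ρ : ℂ := ((hbar ^ (-β) : ℝ) : ℂ) *
      Complex.exp (-(Complex.I * (β : ℂ) * (Real.pi : ℂ) / 2)) * (E : ℂ)
    let s₀ : ℂ := ((|E| ^ (1 / β) : ℝ) : ℂ) / (hbar : ℂ) *
      Complex.exp (Complex.I * ((Real.pi / β - Real.pi / 2 : ℝ) : ℂ))
    Real.pi / β - Real.pi / 2 ∈ Set.Ioo (Real.pi / 2) Real.pi ∧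
    s₀ ^ (β : ℂ) = ρ ∧
    Filter.Tendsto
      (fun s : ℂ => (s - s₀) * s ^ ((β : ℂ) - 1) * Complex.exp (s * (t : ℂ)) /
        (s ^ (β : ℂ) - ρ))
      (nhdsWithin s₀ {s₀}ᶜ)
      (nhds ((1 / (β : ℂ)) *
        Complex.exp (-(Complex.I * (t : ℂ) * ((|E| ^ (1 / β) : ℝ) : ℂ) *
          Complex.exp (Complex.I * (Real.pi : ℂ) / (β : ℂ)) / (hbar : ℂ))))) := by
  intro ρ s₀
  have hθ := pi_div_sub_pi_div_two_mem_Ioo hβ0 hβ1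
  have hr : 0 < |E| ^ (1 / β) / hbar := div_pos (Real.rpow_pos_of_pos (abs_pos.mpr hE.ne) _) hh
  have hs₀ : s₀ = ((|E| ^ (1 / β) / hbar : ℝ) : ℂ) * exp ((π / β - π / 2 : ℝ) * I) := by
    simp only [s₀]; rw [mul_comm I, ofReal_div]
  have hslit : s₀ ∈ slitPlane :=
    hs₀ ▸ ofReal_mul_exp_mul_I_mem_slitPlane hr ⟨by linarith [hθ.1, Real.pi_pos], hθ.2⟩
  have hpow : s₀ ^ (β : ℂ) = ρ := hs₀ ▸ pole_cpow_eq hβ0 hβ1 hh hE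
  refine ⟨hθ, hpow, ?_⟩
  have hβ : (β : ℂ) ≠ 0 := ofReal_ne_zero.mpr (by linarith)
  have hs₀pow : s₀ ^ ((β : ℂ) - 1) ≠ 0 := by simp [cpow_eq_zero_iff, slitPlane_ne_zero hslit]
  have hs₀t : s₀ * t = -(I * t * ((|E| ^ (1 / β) : ℝ) : ℂ) * exp (I * π / β) / hbar) := by
    simp only [s₀]; push_cast
    rw [exp_I_mul_sub_pi_div_two, ← mul_div_assoc]
    ring
  have hf : ContinuousAt (fun s : ℂ => s ^ ((β : ℂ) - 1) * exp (s * t)) s₀ :=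
    (continuousAt_cpow_const hslit).mul (by fun_prop)
  convert tendsto_sub_mul_div_of_hasDerivAt hf
    ((hasStrictDerivAt_cpow_const hslit).hasDerivAt.sub_const ρ) (sub_eq_zero.mpr hpow)
    (mul_ne_zero hβ hs₀pow) using 2
  · ring
  · rw [← hs₀t]
    field_simp
end

section
/- Let 1<α≤2, let θ∈ℝ with 0≤θ≤2−α, and let s∈ℂ with 0 < Re(s) < 1. Then the (improper) oscillatory integral lim_{R→∞} ∫_0^R exp(−i e^{−iθπ/2} u^{α+1}) u^{−s} du exists and equals (1/(α+1)) Γ((1−s)/(α+1)) exp( −iπ(1−θ)(1−s)/(2(α+1)) ). -/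
open MeasureTheory intervalIntegral
open Set Filter Complex Topology
open scoped Real

/-!
Substituting `t = u ^ (α + 1)` turns the integral into `(α + 1)⁻¹ ∫₀^(R^(α+1)) t^(z-1) e^(-b t) dt`
with `z = (1 - s) / (α + 1)` and `b = i e^(-iθπ/2) = e^(iπ(1-θ)/2)`, so that `0 < re z < 1` and
`re b ≥ 0`. For `re b > 0` this integral converges absolutely to `Γ(z) b^(-z)`: both sides are
holomorphic in `b` and agree for real `b`. On the line `re b = 0` it converges only conditionally;
integrating by parts once on `[1, ∞)` expresses its limit by absolutely convergent integrals that
are continuous in `b` on the closed half-plane minus `0`, so the identity extends there by density.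
-/

lemma integrableOn_rpow_Ioc_zero {r : ℝ} (hr : -1 < r) (R : ℝ) :
    IntegrableOn (fun t : ℝ ↦ t ^ r) (Ioc 0 R) := by
  rcases le_total 0 R with hR | hR
  · exact (intervalIntegrable_iff_integrableOn_Ioc_of_le hR).mp (intervalIntegrable_rpow' hr)
  · simp [Ioc_eq_empty_of_le hR]

lemma hasDerivAt_ofReal_cpow_of_pos {t : ℝ} (ht : 0 < t) (w : ℂ) :
    HasDerivAt (fun y : ℝ ↦ (y : ℂ) ^ w) (w * (t : ℂ) ^ (w - 1)) t :=
  (hasStrictDerivAt_cpow_const (ofReal_mem_slitPlane.mpr ht)).hasDerivAt.comp_ofReal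

lemma mem_slitPlane_of_re_nonneg {b : ℂ} (hb : 0 ≤ b.re) (hb0 : b ≠ 0) : b ∈ slitPlane := by
  rcases hb.lt_or_eq with h | h
  · exact mem_slitPlane_iff.mpr (Or.inl h)
  · exact mem_slitPlane_iff.mpr (Or.inr fun him ↦ hb0 (Complex.ext h.symm him))

lemma cexp_cpow {x : ℂ} (h₁ : -π < x.im) (h₂ : x.im ≤ π) (w : ℂ) :
    cexp x ^ w = cexp (x * w) := by
  rw [cpow_def_of_ne_zero (exp_ne_zero x), log_exp h₁ h₂]

lemma I_mul_cexp_neg_I_mul (θ : ℝ) :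
    I * cexp (-(I * θ * π / 2)) = cexp ((π * (1 - θ) / 2 : ℝ) * I) := by
  nth_rewrite 1 [← exp_pi_div_two_mul_I]
  rw [← exp_add]
  congr 1
  push_cast
  ring

lemma integral_comp_rpow_Ioc {E : Type*} [NormedAddCommGroup E] [NormedSpace ℝ E] (g : ℝ → E)
    {p : ℝ} (hp : 0 < p) {R : ℝ} (hR : 0 ≤ R) :
    ∫ x in Ioc 0 R, (p * x ^ (p - 1)) • g (x ^ p) = ∫ y in Ioc 0 (R ^ p), g y := by
  have h : EqOn (fun x ↦ (p * x ^ (p - 1)) • (Iic (R ^ p)).indicator g (x ^ p))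
      ((Iic R).indicator fun x ↦ (p * x ^ (p - 1)) • g (x ^ p)) (Ioi 0) := fun x hx ↦ by
    by_cases hxR : x ≤ R <;>
      simp [indicator, hxR, Real.rpow_le_rpow_iff (le_of_lt hx) hR hp]
  calc ∫ x in Ioc 0 R, (p * x ^ (p - 1)) • g (x ^ p)
      _ = ∫ x in Ioi 0, (Iic R).indicator (fun x ↦ (p * x ^ (p - 1)) • g (x ^ p)) x := by
        rw [setIntegral_indicator measurableSet_Iic, Ioi_inter_Iic]
      _ = ∫ x in Ioi 0, (p * x ^ (p - 1)) • (Iic (R ^ p)).indicator g (x ^ p) :=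
        (setIntegral_congr_fun measurableSet_Ioi h).symm
      _ = ∫ y in Ioi 0, (Iic (R ^ p)).indicator g y := integral_comp_rpow_Ioi_of_pos hp
      _ = ∫ y in Ioc 0 (R ^ p), g y := by
        rw [setIntegral_indicator measurableSet_Iic, Ioi_inter_Iic]

noncomputable def gammaKernel (z b : ℂ) (t : ℝ) : ℂ := (t : ℂ) ^ (z - 1) * cexp (-(b * t))

section
variable {z b : ℂ}

lemma measurable_gammaKernel (z b : ℂ) : Measurable (gammaKernel z b) := by
  unfold gammaKernel
  fun_prop

lemma norm_gammaKernel {t : ℝ} (ht : 0 < t) :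
    ‖gammaKernel z b t‖ = t ^ (z.re - 1) * Real.exp (-(b.re * t)) := by
  simp [gammaKernel, norm_exp, norm_cpow_eq_rpow_re_of_pos ht]

lemma norm_gammaKernel_le_of_re_le {b' : ℂ} {t : ℝ} (ht : 0 < t) (h : b.re ≤ b'.re) :
    ‖gammaKernel z b' t‖ ≤ ‖gammaKernel z b t‖ := by
  rw [norm_gammaKernel ht, norm_gammaKernel ht]
  gcongr

lemma norm_gammaKernel_le {t : ℝ} (ht : 0 < t) (hb : 0 ≤ b.re) :
    ‖gammaKernel z b t‖ ≤ t ^ (z.re - 1) := by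
  simpa [norm_gammaKernel ht] using norm_gammaKernel_le_of_re_le (z := z) (b := 0) ht hb

lemma integrableOn_gammaKernel {s : Set ℝ} (hs : MeasurableSet s) (hs0 : s ⊆ Ioi 0)
    (h : IntegrableOn (fun t ↦ t ^ (z.re - 1)) s) (hb : 0 ≤ b.re) :
    IntegrableOn (gammaKernel z b) s :=
  h.mono' (measurable_gammaKernel z b).aestronglyMeasurable
    (ae_restrict_of_forall_mem hs fun _ ht ↦ norm_gammaKernel_le (hs0 ht) hb)

lemma integrableOn_gammaKernel_Ioi (hz : 0 < z.re) (hb : 0 < b.re) :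
    IntegrableOn (gammaKernel z b) (Ioi 0) := by
  refine (integrableOn_rpow_mul_exp_neg_mul_rpow (s := z.re - 1) (by linarith) one_pos hb).mono'
    (measurable_gammaKernel z b).aestronglyMeasurable
    (ae_restrict_of_forall_mem measurableSet_Ioi fun t ht ↦ ?_)
  simp [norm_gammaKernel (mem_Ioi.mp ht)]

lemma tendsto_gammaKernel_atTop (hz : z.re < 1) (hb : 0 ≤ b.re) :
    Tendsto (gammaKernel z b) atTop (𝓝 0) := by
  refine squeeze_zero_norm' ?_
    (by simpa using tendsto_rpow_neg_atTop (y := 1 - z.re) (by linarith))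
  filter_upwards [eventually_gt_atTop 0] with t ht
  simpa using norm_gammaKernel_le ht hb

lemma integral_gammaKernel_eq_of_parts (hb : b ≠ 0) {a R : ℝ} (ha : 0 < a) (haR : a ≤ R) :
    ∫ t in a..R, gammaKernel z b t =
      (gammaKernel z b a - gammaKernel z b R) / b +
        (z - 1) / b * ∫ t in a..R, gammaKernel (z - 1) b t := by
  have hpos : ∀ t ∈ uIcc a R, 0 < t := fun t ht ↦
    ha.trans_le (by rw [uIcc_of_le haR] at ht; exact ht.1)
  have hexp : ∀ t : ℝ, HasDerivAt (fun y : ℝ ↦ -cexp (-(b * y)) / b) (cexp (-(b * t))) t := by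
    intro t
    have h : HasDerivAt (fun y : ℂ ↦ -cexp (-(b * y)) / b) (cexp (-(b * t))) t := by
      refine (((hasDerivAt_id (t : ℂ)).const_mul b).neg.cexp.neg.div_const b).congr_deriv ?_
      simp [field]
    exact h.comp_ofReal
  have hcont : ∀ w : ℂ, ContinuousOn (fun t : ℝ ↦ (t : ℂ) ^ w) (uIcc a R) := fun w t ht ↦
    (hasDerivAt_ofReal_cpow_of_pos (hpos t ht) w).continuousAt.continuousWithinAt
  have parts := intervalIntegral.integral_mul_deriv_eq_deriv_mul
    (fun t ht ↦ hasDerivAt_ofReal_cpow_of_pos (hpos t ht) (z - 1)) (fun t _ ↦ hexp t)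
    ((continuousOn_const.mul (hcont _)).intervalIntegrable)
    ((by fun_prop : Continuous fun t : ℝ ↦ cexp (-(b * t))).intervalIntegrable a R)
  simp only [gammaKernel] at parts ⊢
  have hint : ∫ t in a..R, (z - 1) * (t : ℂ) ^ (z - 1 - 1) * (-cexp (-(b * t)) / b) =
      -((z - 1) / b * ∫ t in a..R, (t : ℂ) ^ (z - 1 - 1) * cexp (-(b * t))) := by
    rw [← intervalIntegral.integral_const_mul, ← intervalIntegral.integral_neg]
    congr 1 with t
    ring
  rw [parts, hint]
  ring

lemma continuousOn_integral_gammaKernel {s : Set ℝ} (hs : MeasurableSet s) (hs0 : s ⊆ Ioi 0)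
    (h : IntegrableOn (fun t ↦ t ^ (z.re - 1)) s) :
    ContinuousOn (fun b ↦ ∫ t in s, gammaKernel z b t) {b | 0 ≤ b.re} :=
  continuousOn_of_dominated (fun _ _ ↦ (measurable_gammaKernel z _).aestronglyMeasurable)
    (fun _ hb ↦ ae_restrict_of_forall_mem hs fun _ ht ↦ norm_gammaKernel_le (hs0 ht) hb) h
    (ae_of_all _ fun t ↦ by unfold gammaKernel; fun_prop)

/-- `lim_{R → ∞} ∫ t in 0..R, gammaKernel z b t`, written after one integration by parts on
`[1, R]`, which makes it meaningful and continuous in `b` up to the line `re b = 0`. -/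
noncomputable def gammaKernelLimit (z b : ℂ) : ℂ :=
  (∫ t in Ioc 0 1, gammaKernel z b t) + cexp (-b) / b +
    (z - 1) / b * ∫ t in Ioi 1, gammaKernel (z - 1) b t

lemma continuousOn_gammaKernelLimit (hz0 : 0 < z.re) (hz1 : z.re < 1) :
    ContinuousOn (gammaKernelLimit z) {b | 0 ≤ b.re ∧ b ≠ 0} := by
  have hsub : {b : ℂ | 0 ≤ b.re ∧ b ≠ 0} ⊆ {b | 0 ≤ b.re} := fun _ hb ↦ hb.1
  have hne : ∀ b ∈ {b : ℂ | 0 ≤ b.re ∧ b ≠ 0}, b ≠ 0 := fun _ hb ↦ hb.2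
  have h01 := continuousOn_integral_gammaKernel (z := z) measurableSet_Ioc Ioc_subset_Ioi_self
    (integrableOn_rpow_Ioc_zero (by linarith) 1)
  have h1 := continuousOn_integral_gammaKernel (z := z - 1) measurableSet_Ioi
    (Ioi_subset_Ioi zero_le_one) (integrableOn_Ioi_rpow_of_lt (by simp; linarith) one_pos)
  exact ((h01.mono hsub).add ((by fun_prop : Continuous fun b ↦ cexp (-b)).continuousOn.div
    continuousOn_id hne)).add ((continuousOn_const.div continuousOn_id hne).mul (h1.mono hsub))

lemma tendsto_integral_gammaKernel_gammaKernelLimit (hz0 : 0 < z.re) (hz1 : z.re < 1)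
    (hb : 0 ≤ b.re) (hb0 : b ≠ 0) :
    Tendsto (fun R ↦ ∫ t in 0..R, gammaKernel z b t) atTop (𝓝 (gammaKernelLimit z b)) := by
  have hintegrable : ∀ R, 0 ≤ R → IntervalIntegrable (gammaKernel z b) volume 0 R := fun R hR ↦
    (intervalIntegrable_iff_integrableOn_Ioc_of_le hR).mpr (integrableOn_gammaKernel
      measurableSet_Ioc Ioc_subset_Ioi_self (integrableOn_rpow_Ioc_zero (by linarith) R) hb)
  have htail := intervalIntegral_tendsto_integral_Ioi 1 (integrableOn_gammaKernel (z := z - 1)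
    measurableSet_Ioi (Ioi_subset_Ioi zero_le_one)
    (integrableOn_Ioi_rpow_of_lt (by simp; linarith) one_pos) hb) tendsto_id
  have hlim := (((tendsto_gammaKernel_atTop hz1 hb).const_sub (gammaKernel z b 1)).div_const b).add
    (htail.const_mul ((z - 1) / b))
  refine (hlim.const_add (∫ t in Ioc 0 1, gammaKernel z b t)).congr' ?_ |>.trans_eq ?_
  · filter_upwards [eventually_ge_atTop 1] with R hR
    rw [id_eq, ← integral_gammaKernel_eq_of_parts hb0 one_pos hR, ← integral_of_le zero_le_one,
      integral_add_adjacent_intervals (hintegrable 1 zero_le_one)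
        ((hintegrable R (by linarith)).mono_set
          (uIcc_subset_uIcc ⟨by simp, by simp [hR]⟩ right_mem_uIcc))]
  · simp [gammaKernelLimit, gammaKernel, add_assoc]

lemma integral_gammaKernel_Ioi_ofReal (hz : 0 < z.re) {r : ℝ} (hr : 0 < r) :
    ∫ t in Ioi 0, gammaKernel z r t = Gamma z * (r : ℂ) ^ (-z) := by
  simp only [gammaKernel]
  rw [integral_cpow_mul_exp_neg_mul_Ioi hz hr, one_div,
    inv_cpow _ _ (by simp [arg_ofReal_of_nonneg hr.le, Real.pi_ne_zero.symm]), ← cpow_neg, mul_comm]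

lemma hasDerivAt_gammaKernel (z : ℂ) {t : ℝ} (ht : 0 < t) (b : ℂ) :
    HasDerivAt (fun b ↦ gammaKernel z b t) (-gammaKernel (z + 1) b t) b := by
  have h := (((hasDerivAt_id b).mul_const (t : ℂ)).neg.cexp).const_mul ((t : ℂ) ^ (z - 1))
  refine h.congr_deriv ?_
  simp only [gammaKernel, add_sub_cancel_right, id]
  have ht' : (t : ℂ) ≠ 0 := by exact_mod_cast ht.ne'
  rw [cpow_sub _ _ ht', cpow_one]
  simp only [Pi.neg_apply, one_mul]
  field_simp

lemma differentiableOn_integral_gammaKernel (hz : 0 < z.re) :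
    DifferentiableOn ℂ (fun b ↦ ∫ t in Ioi 0, gammaKernel z b t) {b | 0 < b.re} := by
  intro b₀ hb₀
  have hε : 0 < b₀.re / 2 := half_pos hb₀
  have hball : ∀ b ∈ Metric.ball b₀ (b₀.re / 2), b₀.re / 2 ≤ b.re := fun b hb ↦ by
    have := (abs_re_le_norm (b - b₀)).trans (mem_ball_iff_norm.mp hb).le
    rw [sub_re, abs_le] at this
    linarith
  refine (hasDerivAt_integral_of_dominated_loc_of_deriv_le (Metric.ball_mem_nhds b₀ hε)
    (Eventually.of_forall fun b ↦ (measurable_gammaKernel z b).aestronglyMeasurable)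
    (integrableOn_gammaKernel_Ioi hz hb₀)
    (measurable_gammaKernel (z + 1) b₀).neg.aestronglyMeasurable
    (bound := fun t ↦ ‖gammaKernel (z + 1) (b₀.re / 2 : ℝ) t‖) ?_
    (integrableOn_gammaKernel_Ioi (by simp; linarith) (by simpa using hε)).norm
    (ae_restrict_of_forall_mem measurableSet_Ioi fun t ht b _ ↦
      hasDerivAt_gammaKernel z ht b)).2.differentiableAt.differentiableWithinAt
  filter_upwards [ae_restrict_mem measurableSet_Ioi] with t ht b hb
  rw [norm_neg]
  exact norm_gammaKernel_le_of_re_le ht (by simpa using hball b hb)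

lemma integral_gammaKernel_Ioi (hz : 0 < z.re) (hb : 0 < b.re) :
    ∫ t in Ioi 0, gammaKernel z b t = Gamma z * b ^ (-z) := by
  have hU : IsOpen {b : ℂ | 0 < b.re} := isOpen_lt continuous_const continuous_re
  have hpow : DifferentiableOn ℂ (fun b : ℂ ↦ Gamma z * b ^ (-z)) {b | 0 < b.re} := fun b hb ↦
    ((differentiableAt_id.cpow_const (Or.inl hb)).const_mul _).differentiableWithinAt
  have hreal : ∃ᶠ b in 𝓝[≠] (1 : ℂ), (∫ t in Ioi 0, gammaKernel z b t) = Gamma z * b ^ (-z) := by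
    have hofReal : Tendsto ((↑) : ℝ → ℂ) (𝓝[≠] 1) (𝓝[≠] 1) :=
      tendsto_nhdsWithin_of_tendsto_nhds_of_eventually_within _
        ((continuous_ofReal.tendsto' 1 1 ofReal_one).mono_left nhdsWithin_le_nhds)
        (eventually_nhdsWithin_of_forall fun r hr ↦ by simpa using hr)
    refine hofReal.frequently (Eventually.frequently ?_)
    filter_upwards [eventually_nhdsWithin_of_eventually_nhds (eventually_gt_nhds one_pos)]
      with r hr using integral_gammaKernel_Ioi_ofReal hz hr
  exact AnalyticOnNhd.eqOn_of_preconnected_of_frequently_eq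
    ((differentiableOn_integral_gammaKernel hz).analyticOnNhd hU) (hpow.analyticOnNhd hU)
    (convex_halfSpace_re_gt 0).isPreconnected (by simp) hreal hb

lemma gammaKernelLimit_eq (hz0 : 0 < z.re) (hz1 : z.re < 1) (hb : 0 ≤ b.re) (hb0 : b ≠ 0) :
    gammaKernelLimit z b = Gamma z * b ^ (-z) := by
  have hinterior : EqOn (gammaKernelLimit z) (fun b ↦ Gamma z * b ^ (-z)) {b | 0 < b.re} :=
    fun b hb ↦ tendsto_nhds_unique
      (tendsto_integral_gammaKernel_gammaKernelLimit hz0 hz1 hb.le (by rintro rfl; simp at hb))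
      ((intervalIntegral_tendsto_integral_Ioi 0 (integrableOn_gammaKernel_Ioi hz0 hb)
        tendsto_id).trans_eq (congrArg 𝓝 (integral_gammaKernel_Ioi hz0 hb)))
  refine hinterior.of_subset_closure (continuousOn_gammaKernelLimit hz0 hz1) ?_ ?_ ?_ ⟨hb, hb0⟩
  · exact fun b hb ↦ ((continuousAt_cpow_const (mem_slitPlane_of_re_nonneg hb.1 hb.2)).const_mul
      _).continuousWithinAt
  · exact fun b hb ↦ ⟨hb.le, by rintro rfl; simp at hb⟩
  · rw [closure_setOfPred_lt_re]
    exact fun b hb ↦ hb.1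

lemma tendsto_integral_gammaKernel (hz0 : 0 < z.re) (hz1 : z.re < 1) (hb : 0 ≤ b.re)
    (hb0 : b ≠ 0) :
    Tendsto (fun R ↦ ∫ t in 0..R, gammaKernel z b t) atTop (𝓝 (Gamma z * b ^ (-z))) :=
  gammaKernelLimit_eq hz0 hz1 hb hb0 ▸ tendsto_integral_gammaKernel_gammaKernelLimit hz0 hz1 hb hb0

end

lemma integral_cexp_neg_mul_rpow_mul_cpow (b s : ℂ) {p : ℝ} (hp : 0 < p) {R : ℝ} (hR : 0 ≤ R) :
    ∫ u in 0..R, cexp (-(b * ((u ^ p : ℝ) : ℂ))) * (u : ℂ) ^ (-s) =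
      (p : ℂ)⁻¹ * ∫ t in 0..R ^ p, gammaKernel ((1 - s) / p) b t := by
  rw [integral_of_le hR, integral_of_le (Real.rpow_nonneg hR p), ← integral_comp_rpow_Ioc _ hp hR,
    ← MeasureTheory.integral_const_mul]
  refine setIntegral_congr_fun measurableSet_Ioc fun u hu ↦ ?_
  have hu0 : (u : ℂ) ≠ 0 := by exact_mod_cast hu.1.ne'
  have hp0 : (p : ℂ) ≠ 0 := by exact_mod_cast hp.ne'
  have hexp : ((u ^ (p - 1) : ℝ) : ℂ) * (u : ℂ) ^ ((p : ℂ) * ((1 - s) / p - 1)) =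
      (u : ℂ) ^ (-s) := by
    rw [ofReal_cpow hu.1.le, ← cpow_add _ _ hu0]
    congr 1
    push_cast
    field_simp
    ring
  simp only [gammaKernel, real_smul, ← cpow_mul_ofReal_nonneg hu.1.le]
  rw [← hexp, ofReal_mul]
  field_simp

theorem oscillatory_integral_phi2_general
    (α θ : ℝ) (hα1 : 1 < α) (hθ0 : 0 ≤ θ) (hθ1 : θ ≤ 2 - α)
    (s : ℂ) (hs0 : 0 < s.re) (hs1 : s.re < 1) :
    Filter.Tendsto
      (fun R : ℝ => ∫ u in (0 : ℝ)..R,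
        Complex.exp (-(Complex.I * Complex.exp (-(Complex.I * (θ : ℂ) * (Real.pi : ℂ) / 2)) *
          ((u ^ (α + 1) : ℝ) : ℂ))) * (u : ℂ) ^ (-s))
      Filter.atTop
      (nhds ((1 / ((α : ℂ) + 1)) * Complex.Gamma ((1 - s) / ((α : ℂ) + 1)) *
        Complex.exp (-(Complex.I * (Real.pi : ℂ) * (1 - (θ : ℂ)) * (1 - s) /
          (2 * ((α : ℂ) + 1)))))) := by
  rw [I_mul_cexp_neg_I_mul]
  set φ : ℝ := π * (1 - θ) / 2 with hφ
  have hφ0 : 0 < φ := by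
    have : 0 < 1 - θ := by linarith
    positivity
  have hφ1 : φ ≤ π / 2 := by have := Real.pi_pos; nlinarith
  have hbre : 0 ≤ (cexp (φ * I)).re := by
    rw [exp_ofReal_mul_I_re]
    exact Real.cos_nonneg_of_mem_Icc ⟨by linarith, hφ1⟩
  have hp : 0 < α + 1 := by linarith
  set z := (1 - s) / ((α : ℂ) + 1) with hz
  have hzre : z.re = (1 - s.re) / (α + 1) := by
    rw [hz, show (α : ℂ) + 1 = ((α + 1 : ℝ) : ℂ) by push_cast; ring, div_ofReal_re, sub_re, one_re]
  have hz0 : 0 < z.re := by rw [hzre]; exact div_pos (by linarith) hp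
  have hz1 : z.re < 1 := by rw [hzre, div_lt_one hp]; linarith
  have hsubst : ∀ R : ℝ, 0 ≤ R →
      ∫ u in 0..R, cexp (-(cexp (φ * I) * ((u ^ (α + 1) : ℝ) : ℂ))) * (u : ℂ) ^ (-s) =
        ((α : ℂ) + 1)⁻¹ * ∫ t in 0..R ^ (α + 1), gammaKernel z (cexp (φ * I)) t := fun R hR ↦ by
    simpa using integral_cexp_neg_mul_rpow_mul_cpow (cexp (φ * I)) s hp hR
  have hlim := ((tendsto_integral_gammaKernel hz0 hz1 hbre (exp_ne_zero _)).comp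
    (tendsto_rpow_atTop hp)).const_mul ((α : ℂ) + 1)⁻¹
  convert hlim.congr' ((eventually_ge_atTop 0).mono fun R hR ↦ (hsubst R hR).symm) using 2
  rw [cexp_cpow (by simp; linarith) (by simp; linarith), hz]
  push_cast [hφ]
  field_simp

theorem oscillatory_integral_phi2
    (α θ : ℝ) (hα1 : 1 < α) (hα2 : α ≤ 2) (hθ0 : 0 ≤ θ) (hθ1 : θ ≤ 2 - α)
    (s : ℂ) (hs0 : 0 < s.re) (hs1 : s.re < 1) :
    Filter.Tendsto
      (fun R : ℝ => ∫ u in (0 : ℝ)..R,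
        Complex.exp (-(Complex.I * Complex.exp (-(Complex.I * (θ : ℂ) * (Real.pi : ℂ) / 2)) *
          ((u ^ (α + 1) : ℝ) : ℂ))) * (u : ℂ) ^ (-s))
      Filter.atTop
      (nhds ((1 / ((α : ℂ) + 1)) * Complex.Gamma ((1 - s) / ((α : ℂ) + 1)) *
        Complex.exp (-(Complex.I * (Real.pi : ℂ) * (1 - (θ : ℂ)) * (1 - s) /
          (2 * ((α : ℂ) + 1)))))) :=
  oscillatory_integral_phi2_general α θ hα1 hθ0 hθ1 s hs0 hs1
end

section
/- For every z∈ℂ: ∑_{n=0}^∞ (−z)^n / ( n! Γ(−n/2 + 1/2) ) = (1/√π) exp(−z²/4); that is, the Mainardi–Wright function M_ν of order ν = 1/2 is the Gaussian M_{1/2}(z) = (1/√π) e^{−z²/4}. -/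
/-! Only the even terms survive: at `n = 2k + 1` the Gamma factor is `Γ(-k) = 0`, and at
`n = 2k` the recursion `Γ(s + 1) = s Γ(s)` run down from `Γ(1/2) = √π` gives
`(2k)! Γ(1/2 - k) = (-4)^k k! √π`, so the `2k`-th term is `(-z²/4)^k / (k! √π)`, the
exponential series of `-z²/4` scaled by `1/√π`. -/

open Nat Real

lemma tsum_eq_tsum_even_of_odd_eq_zero {α : Type*} [AddCommMonoid α] [TopologicalSpace α]
    {f : ℕ → α} (hf : ∀ k, f (2 * k + 1) = 0) : ∑' n, f n = ∑' k, f (2 * k) := by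
  have hsupp : Function.support f ⊆ Set.range (2 * ·) := by
    intro n hn
    obtain ⟨k, rfl | rfl⟩ := n.even_or_odd'
    · exact ⟨k, rfl⟩
    · exact absurd (hf k) hn
  exact ((mul_right_injective₀ two_ne_zero).tsum_eq hsupp).symm

lemma Real.Gamma_one_half_sub_nat_mul_factorial (k : ℕ) :
    Gamma (1 / 2 - k) * (2 * k)! = (-4) ^ k * k ! * √π := by
  induction k with
  | zero => norm_num [Gamma_one_half_eq]
  | succ k ih =>
    have hrec : Gamma (1 / 2 - k) = (-1 / 2 - k) * Gamma (1 / 2 - (k + 1)) := by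
      have hne : (1 / 2 - (k + 1) : ℝ) ≠ 0 := by linarith [(k.cast_nonneg : (0 : ℝ) ≤ k)]
      rw [show (1 / 2 - k : ℝ) = 1 / 2 - (k + 1) + 1 by ring, Gamma_add_one hne]
      ring
    rw [show 2 * (k + 1) = 2 * k + 1 + 1 by ring, factorial_succ, factorial_succ,
      factorial_succ] at *
    push_cast at *
    linear_combination (4 * (k + 1) * ((2 * k)! : ℝ)) * hrec - (4 * (k + 1)) * ih

lemma mainardi_wright_half_term_odd (z : ℂ) (k : ℕ) :
    (-z) ^ (2 * k + 1) /
      (((2 * k + 1)! : ℂ) * (Gamma (-((2 * k + 1 : ℕ) : ℝ) / 2 + 1 / 2) : ℂ)) = 0 := by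
  rw [show -((2 * k + 1 : ℕ) : ℝ) / 2 + 1 / 2 = -k by push_cast; ring, Gamma_neg_nat_eq_zero,
    Complex.ofReal_zero, mul_zero, div_zero]

lemma mainardi_wright_half_term_even (z : ℂ) (k : ℕ) :
    (-z) ^ (2 * k) / (((2 * k)! : ℂ) * (Gamma (-((2 * k : ℕ) : ℝ) / 2 + 1 / 2) : ℂ)) =
      1 / (√π : ℂ) * ((-z ^ 2 / 4) ^ k / (k ! : ℂ)) := by
  have hGamma : ((2 * k)! : ℂ) * (Gamma (-((2 * k : ℕ) : ℝ) / 2 + 1 / 2) : ℂ) =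
      (-4) ^ k * k ! * √π := by
    rw [show -((2 * k : ℕ) : ℝ) / 2 + 1 / 2 = 1 / 2 - k by push_cast; ring, mul_comm]
    exact_mod_cast Gamma_one_half_sub_nat_mul_factorial k
  have hpi : (√π : ℂ) ≠ 0 := Complex.ofReal_ne_zero.mpr (sqrt_pos.mpr pi_pos).ne'
  rw [hGamma, pow_mul, neg_sq, show -z ^ 2 / 4 = z ^ 2 / (-4) by ring, div_pow]
  field_simp

theorem mainardi_wright_half_eq_gaussian (z : ℂ) :
    ∑' n : ℕ, (-z) ^ n / ((n.factorial : ℂ) * (Real.Gamma (-(n : ℝ) / 2 + 1 / 2) : ℂ)) =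
      (1 / (Real.sqrt Real.pi : ℂ)) * Complex.exp (-z ^ 2 / 4) := by
  rw [tsum_eq_tsum_even_of_odd_eq_zero (mainardi_wright_half_term_odd z)]
  simp_rw [mainardi_wright_half_term_even]
  rw [tsum_mul_left, Complex.exp_eq_exp_ℂ, NormedSpace.exp_eq_tsum_div]
end
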